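/- arXiv:1407.6871 — 3 statements merged into one kernel-verified Lean document; each statement's English description precedes it below -/
import Mathlib

section
/- For each integer n ≥ 1, θ_n < (1 + θ_n²)/(nπ + π/2). -/
/-!
Since `α + θ = nπ + π/2`, the equation `sin α = α cos α` becomes `cos θ = α sin θ`, i.e.
`α = cot θ`. On `(0, π/2)` we have `θ < tan θ`, so `θ α = θ cot θ < 1`, and then
`θ (nπ + π/2) = θ α + θ² < 1 + θ²`.
-/

open Real

theorem sin_nat_mul_pi_add_pi_div_two_sub (n : ℕ) (x : ℝ) :
    sin (n * π + π / 2 - x) = (-1) ^ n * cos x := by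
  rw [add_sub_assoc, add_comm, sin_add_nat_mul_pi, sin_pi_div_two_sub]

theorem cos_nat_mul_pi_add_pi_div_two_sub (n : ℕ) (x : ℝ) :
    cos (n * π + π / 2 - x) = (-1) ^ n * sin x := by
  rw [add_sub_assoc, add_comm, cos_add_nat_mul_pi, cos_pi_div_two_sub]

theorem cos_nat_mul_pi_add_pi_div_two_sub_eq_mul_sin {x : ℝ} (h : sin x = x * cos x) (n : ℕ) :
    cos (n * π + π / 2 - x) = x * sin (n * π + π / 2 - x) := by
  rw [cos_nat_mul_pi_add_pi_div_two_sub, sin_nat_mul_pi_add_pi_div_two_sub, h]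
  ring

theorem mul_cos_lt_sin {x : ℝ} (h0 : 0 < x) (h1 : x < π / 2) : x * cos x < sin x := by
  have hcos : 0 < cos x := cos_pos_of_mem_Ioo ⟨by linarith, h1⟩
  have htan := lt_tan h0 h1
  rwa [tan_eq_sin_div_cos, lt_div_iff₀ hcos] at htan

theorem mul_lt_one_of_cos_eq_mul_sin {x a : ℝ} (h0 : 0 < x) (h1 : x < π / 2)
    (h : cos x = a * sin x) : x * a < 1 := by
  have hsin : 0 < sin x := sin_pos_of_pos_of_lt_pi h0 (by linarith [pi_pos])
  have hlt : x * a * sin x < 1 * sin x := by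
    calc x * a * sin x = x * cos x := by rw [h]; ring
      _ < 1 * sin x := by rw [one_mul]; exact mul_cos_lt_sin h0 h1
  exact lt_of_mul_lt_mul_right hlt hsin.le

theorem theta_lt (α : ℕ → ℝ)
    (hα : ∀ n : ℕ, 1 ≤ n →
      α n ∈ Set.Ioo (n * Real.pi) (n * Real.pi + Real.pi / 2) ∧
        Real.sin (α n) - α n * Real.cos (α n) = 0)
    (n : ℕ) (hn : 1 ≤ n) :
    (n * Real.pi + Real.pi / 2 - α n) <
      (1 + (n * Real.pi + Real.pi / 2 - α n) ^ 2) / (n * Real.pi + Real.pi / 2) := by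
  obtain ⟨⟨hlo, hhi⟩, hroot⟩ := hα n hn
  set θ := n * π + π / 2 - α n with hθ
  have hθα : θ * α n < 1 := by
    refine mul_lt_one_of_cos_eq_mul_sin (by linarith) (by linarith) ?_
    exact cos_nat_mul_pi_add_pi_div_two_sub_eq_mul_sin (by linarith) n
  have hsplit : θ * (n * π + π / 2) = θ * α n + θ ^ 2 := by rw [hθ]; ring
  rw [lt_div_iff₀ (by positivity)]
  linarith
end

section
/- For all x, y in the closed interval [1/α_2, 1/α_1], |x·sin(1/x) − y·sin(1/y)| ≤ √(2·|y − x|). -/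
/-!
With `f t = t * sin (1 / t)`, Cauchy–Schwarz gives `(f y - f x) ^ 2 ≤ |y - x| * ∫ f' ^ 2`, the
integral over the whole interval `[1 / α₂, 1 / α₁]`. The square of
`f' t = sin (1 / t) - cos (1 / t) / t` has an elementary primitive, and at `t = 1 / α` with
`tan α = α` it equals `-α³ / (2 (1 + α²))`. This is increasing in `α`, so with `4 ≤ α₁`
and `α₂ < 5π/2` the integral is at most `66/17 - 32/17 = 2`.
-/

open Real Set Filter MeasureTheory

theorem sq_intervalIntegral_le_mul_integral_sq {g : ℝ → ℝ} {a b : ℝ} (hab : a ≤ b)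
    (hg : IntervalIntegrable g volume a b)
    (hg2 : IntervalIntegrable (fun t => g t ^ 2) volume a b) :
    (∫ t in a..b, g t) ^ 2 ≤ (b - a) * ∫ t in a..b, g t ^ 2 := by
  rcases hab.eq_or_lt with rfl | hlt
  · simp
  set I := ∫ t in a..b, g t
  set J := ∫ t in a..b, g t ^ 2
  have hvar : 0 ≤ ∫ t in a..b, ((b - a) * g t - I) ^ 2 :=
    intervalIntegral.integral_nonneg hab fun t _ => sq_nonneg _
  have hexpand : ∫ t in a..b, ((b - a) * g t - I) ^ 2 = (b - a) * ((b - a) * J - I ^ 2) := by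
    have hsplit : (fun t => ((b - a) * g t - I) ^ 2)
        = fun t => ((b - a) ^ 2 * g t ^ 2 - (2 * (b - a) * I) * g t) + I ^ 2 := by
      funext t; ring
    rw [hsplit,
      intervalIntegral.integral_add ((hg2.const_mul _).sub (hg.const_mul _))
        intervalIntegrable_const,
      intervalIntegral.integral_sub (hg2.const_mul _) (hg.const_mul _),
      intervalIntegral.integral_const_mul, intervalIntegral.integral_const_mul,
      intervalIntegral.integral_const, smul_eq_mul]
    ring
  rw [hexpand] at hvar
  nlinarith [(mul_nonneg_iff_of_pos_left (sub_pos.2 hlt)).1 hvar]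

section HolderOfDerivSq

variable {f f' : ℝ → ℝ} {a b C : ℝ}

theorem sq_sub_le_of_integral_deriv_sq_le (hf : ∀ t ∈ Icc a b, HasDerivAt f (f' t) t)
    (hf' : ContinuousOn f' (Icc a b)) (hC : ∫ t in a..b, f' t ^ 2 ≤ C) {x y : ℝ}
    (hx : x ∈ Icc a b) (hy : y ∈ Icc a b) (hxy : x ≤ y) :
    (f y - f x) ^ 2 ≤ C * (y - x) := by
  have hsub : Icc x y ⊆ Icc a b := Icc_subset_Icc hx.1 hy.2
  have hf'xy : ContinuousOn f' (uIcc x y) := by rw [uIcc_of_le hxy]; exact hf'.mono hsub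
  have hftc : ∫ t in x..y, f' t = f y - f x :=
    intervalIntegral.integral_eq_sub_of_hasDerivAt
      (fun t ht => hf t (hsub (by rwa [uIcc_of_le hxy] at ht))) hf'xy.intervalIntegrable
  have hmono : ∫ t in x..y, f' t ^ 2 ≤ ∫ t in a..b, f' t ^ 2 :=
    intervalIntegral.integral_mono_interval hx.1 hxy hy.2
      (Eventually.of_forall fun t => sq_nonneg (f' t))
      ((hf'.pow 2).intervalIntegrable_of_Icc (hx.1.trans (hxy.trans hy.2)))
  calc (f y - f x) ^ 2 ≤ (y - x) * ∫ t in x..y, f' t ^ 2 := by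
        rw [← hftc]
        exact sq_intervalIntegral_le_mul_integral_sq hxy hf'xy.intervalIntegrable
          (hf'xy.pow 2).intervalIntegrable
    _ ≤ (y - x) * C := by gcongr; exact hmono.trans hC
    _ = C * (y - x) := mul_comm _ _

theorem abs_sub_le_sqrt_of_integral_deriv_sq_le (hf : ∀ t ∈ Icc a b, HasDerivAt f (f' t) t)
    (hf' : ContinuousOn f' (Icc a b)) (hC : ∫ t in a..b, f' t ^ 2 ≤ C) {x y : ℝ}
    (hx : x ∈ Icc a b) (hy : y ∈ Icc a b) :
    |f x - f y| ≤ √(C * |y - x|) := by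
  apply abs_le_sqrt
  rcases le_total x y with hxy | hyx
  · rw [abs_of_nonneg (sub_nonneg.2 hxy), ← neg_sub, neg_sq]
    exact sq_sub_le_of_integral_deriv_sq_le hf hf' hC hx hy hxy
  · rw [abs_sub_comm, abs_of_nonneg (sub_nonneg.2 hyx)]
    exact sq_sub_le_of_integral_deriv_sq_le hf hf' hC hy hx hyx

end HolderOfDerivSq

noncomputable def xSinInvDeriv (t : ℝ) : ℝ := sin (1 / t) - cos (1 / t) / t

noncomputable def xSinInvDerivSqPrimitive (t : ℝ) : ℝ :=
  t * sin (1 / t) ^ 2 - 1 / (2 * t) - sin (2 / t) / 4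

theorem hasDerivAt_one_div {t : ℝ} (ht : t ≠ 0) :
    HasDerivAt (fun s : ℝ => 1 / s) (-(1 / t ^ 2)) t := by
  simpa using hasDerivAt_inv ht

theorem hasDerivAt_mul_sin_one_div {t : ℝ} (ht : t ≠ 0) :
    HasDerivAt (fun s => s * sin (1 / s)) (xSinInvDeriv t) t := by
  refine ((hasDerivAt_id' t).mul (hasDerivAt_one_div ht).sin).congr_deriv ?_
  simp only [xSinInvDeriv]
  field_simp
  ring

theorem hasDerivAt_xSinInvDerivSqPrimitive {t : ℝ} (ht : t ≠ 0) :
    HasDerivAt xSinInvDerivSqPrimitive (xSinInvDeriv t ^ 2) t := by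
  have hinv := hasDerivAt_one_div ht
  have hform : xSinInvDerivSqPrimitive
      = fun s => s * sin (1 / s) ^ 2 - 1 / 2 * (1 / s) - sin (2 * (1 / s)) / 4 := by
    funext s
    simp only [xSinInvDerivSqPrimitive]
    ring_nf
  rw [hform]
  refine ((((hasDerivAt_id' t).mul (hinv.sin.pow 2)).sub (hinv.const_mul (1 / 2))).sub
    ((hinv.const_mul 2).sin.div_const 4)).congr_deriv ?_
  simp only [xSinInvDeriv, Pi.pow_apply, cos_two_mul]
  field_simp
  ring

theorem continuousOn_xSinInvDeriv {s : Set ℝ} (hs : ∀ t ∈ s, t ≠ 0) :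
    ContinuousOn xSinInvDeriv s := by
  unfold xSinInvDeriv
  fun_prop (disch := assumption)

theorem xSinInvDerivSqPrimitive_one_div {A : ℝ} (hA : 0 < A) (hφ : sin A - A * cos A = 0) :
    xSinInvDerivSqPrimitive (1 / A) = -(A ^ 3 / (2 * (1 + A ^ 2))) := by
  have hsin_sq : sin A ^ 2 * (1 + A ^ 2) = A ^ 2 := by
    linear_combination (sin A + A * cos A) * hφ + A ^ 2 * sin_sq_add_cos_sq A
  have htwo : 2 / (1 / A) = 2 * A := by field_simp
  simp only [xSinInvDerivSqPrimitive, one_div_one_div, htwo, sin_two_mul]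
  field_simp
  linear_combination 4 * sin A * (1 + A ^ 2) * hφ + 4 * hsin_sq

theorem strictAntiOn_sin_sub_mul_cos :
    StrictAntiOn (fun t => sin t - t * cos t) (Icc π (2 * π)) := by
  apply strictAntiOn_of_deriv_neg (convex_Icc _ _) (by fun_prop)
  intro t ht
  rw [interior_Icc] at ht
  have hderiv : HasDerivAt (fun t => sin t - t * cos t) (t * sin t) t := by
    refine ((hasDerivAt_sin t).sub ((hasDerivAt_id' t).mul (hasDerivAt_cos t))).congr_deriv ?_
    ring
  have hsin : sin t < 0 := by
    rw [← sin_sub_two_pi]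
    exact sin_neg_of_neg_of_neg_pi_lt (by linarith [ht.2]) (by linarith [ht.1])
  rw [hderiv.deriv]
  nlinarith [ht.1, pi_pos]

theorem sin_sub_mul_cos_four_pos : 0 < sin 4 - 4 * cos 4 := by
  have hsin : sin 4 = -sin (4 - π) := by rw [← sin_add_pi, sub_add_cancel]
  have hcos : cos 4 = -cos (4 - π) := by rw [← cos_add_pi, sub_add_cancel]
  have hπ₁ := pi_gt_d6
  have hπ₂ := pi_lt_d6
  have hs : sin (4 - π) < 4 - π := sin_lt (by linarith)
  have hc : 1 - (4 - π) ^ 2 / 2 ≤ cos (4 - π) := one_sub_sq_div_two_le_cos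
  rw [hsin, hcos]
  nlinarith

theorem four_le_of_sin_sub_mul_cos_eq_zero {A : ℝ} (hπA : π < A) (hA : A ≤ 2 * π)
    (hφ : sin A - A * cos A = 0) : 4 ≤ A := by
  by_contra! hA4
  have h4 : (4 : ℝ) ≤ 2 * π := by linarith [pi_gt_three]
  have := strictAntiOn_sin_sub_mul_cos ⟨hπA.le, hA⟩ ⟨by linarith, h4⟩ hA4
  simp only [hφ] at this
  linarith [sin_sub_mul_cos_four_pos]

theorem cube_div_le_of_le_five_pi_div_two {A : ℝ} (h0 : 0 < A) (h : A ≤ 5 * π / 2) :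
    A ^ 3 / (2 * (1 + A ^ 2)) ≤ 66 / 17 := by
  have hA : A ≤ 7.8539825 := by linarith [pi_lt_d6]
  rw [div_le_div_iff₀ (by positivity) (by norm_num)]
  nlinarith [mul_nonneg (sub_nonneg.2 hA) (sq_nonneg A),
    mul_nonneg (sub_nonneg.2 hA) (mul_nonneg (sub_nonneg.2 hA) (sq_nonneg A)),
    mul_nonneg (sub_nonneg.2 hA) h0.le]

theorem le_cube_div_of_four_le {A : ℝ} (h : 4 ≤ A) : 32 / 17 ≤ A ^ 3 / (2 * (1 + A ^ 2)) := by
  rw [div_le_div_iff₀ (by norm_num) (by positivity)]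
  nlinarith [mul_nonneg (sub_nonneg.2 h) (sq_nonneg A)]

theorem integral_xSinInvDeriv_sq_le_two {A B : ℝ} (hA : 4 ≤ A) (hB₀ : 0 < B)
    (hB : B ≤ 5 * π / 2) (hφA : sin A - A * cos A = 0) (hφB : sin B - B * cos B = 0) :
    ∫ t in 1 / B..1 / A, xSinInvDeriv t ^ 2 ≤ 2 := by
  have hA₀ : 0 < A := by linarith
  have hne : ∀ t ∈ uIcc (1 / B) (1 / A), t ≠ 0 := fun t ht =>
    ((lt_min (one_div_pos.2 hB₀) (one_div_pos.2 hA₀)).trans_le ht.1).ne'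
  rw [intervalIntegral.integral_eq_sub_of_hasDerivAt
      (fun t ht => hasDerivAt_xSinInvDerivSqPrimitive (hne t ht))
      ((continuousOn_xSinInvDeriv hne).pow 2).intervalIntegrable,
    xSinInvDerivSqPrimitive_one_div hA₀ hφA, xSinInvDerivSqPrimitive_one_div hB₀ hφB]
  linarith [cube_div_le_of_le_five_pi_div_two hB₀ hB, le_cube_div_of_four_le hA]

theorem holder_first_interval_improved (α : ℕ → ℝ)
    (hα : ∀ n : ℕ, 1 ≤ n →
      α n ∈ Set.Ioo (n * Real.pi) (n * Real.pi + Real.pi / 2) ∧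
        Real.sin (α n) - α n * Real.cos (α n) = 0)
    (x y : ℝ) (hx : x ∈ Set.Icc (1 / α 2) (1 / α 1))
    (hy : y ∈ Set.Icc (1 / α 2) (1 / α 1)) :
    |x * Real.sin (1 / x) - y * Real.sin (1 / y)| ≤ Real.sqrt (2 * |y - x|) := by
  obtain ⟨⟨hα₁π, hα₁⟩, hφ₁⟩ := hα 1 le_rfl
  obtain ⟨⟨hα₂π, hα₂⟩, hφ₂⟩ := hα 2 (by norm_num)
  push_cast at hα₁π hα₁ hα₂π hα₂
  have hα₁4 : 4 ≤ α 1 := four_le_of_sin_sub_mul_cos_eq_zero (by linarith) (by linarith) hφ₁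
  have hne : ∀ t ∈ Icc (1 / α 2) (1 / α 1), t ≠ 0 := fun t ht =>
    ((one_div_pos.2 (by linarith [pi_pos])).trans_le ht.1).ne'
  have hintegral :=
    integral_xSinInvDeriv_sq_le_two hα₁4 (by linarith [pi_pos]) (by linarith) hφ₁ hφ₂
  exact abs_sub_le_sqrt_of_integral_deriv_sq_le
    (fun t ht => hasDerivAt_mul_sin_one_div (hne t ht)) (continuousOn_xSinInvDeriv hne)
    hintegral hx hy
end

section
/- For each integer n ≥ 1, the function f(x) = x·sin(1/x) is monotone on the closed interval [1/α_{n+1}, 1/α_n]; that is, its derivative f'(x) = sin(1/x) − (1/x)·cos(1/x) has constant sign on that interval (it is everywhere ≥ 0 or everywhere ≤ 0 there). -/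
/-!
With `φ t = sin t - t cos t` we have `φ' t = t sin t` and `d/dx (x sin (1/x)) = φ (1/x)`.
Since `(-1)ᵐ sin ≥ 0` on `[mπ, (m+1)π]`, the function `(-1)ᵐ φ` increases there, so it is
nonnegative to the right of its zero `α m` and, by the same argument one half-period later,
to the left of `α (m+1)`. Hence `(-1)ⁿ f' ≥ 0` on `[1/α (n+1), 1/α n]`.
-/

open Real Set

noncomputable def sinSubMulCos (t : ℝ) : ℝ := sin t - t * cos t

lemma hasDerivAt_sinSubMulCos (t : ℝ) : HasDerivAt sinSubMulCos (t * sin t) t := by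
  have h := (hasDerivAt_sin t).sub ((hasDerivAt_id t).mul (hasDerivAt_cos t))
  exact h.congr_deriv (by simp)

lemma hasDerivAt_mul_sin_one_div_s18 {x : ℝ} (hx : x ≠ 0) :
    HasDerivAt (fun x => x * sin (1 / x)) (sinSubMulCos (1 / x)) x := by
  have hinv : HasDerivAt (fun x : ℝ => 1 / x) (-(1 / x ^ 2)) x := by
    simpa [one_div] using hasDerivAt_inv hx
  refine ((hasDerivAt_id x).mul ((hasDerivAt_sin (1 / x)).comp x hinv)).congr_deriv ?_
  simp only [sinSubMulCos, id, Function.comp_apply]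
  field_simp
  ring

lemma neg_one_pow_mul_sin_nonneg (m : ℕ) {t : ℝ} (ht : t ∈ Icc (m * π) ((m + 1) * π)) :
    0 ≤ (-1) ^ m * sin t := by
  have hshift : sin t = (-1) ^ m * sin (t - m * π) := by
    rw [← sin_add_nat_mul_pi, sub_add_cancel]
  rw [hshift, ← mul_assoc, ← mul_pow, neg_one_mul, neg_neg, one_pow, one_mul]
  exact sin_nonneg_of_nonneg_of_le_pi (by linarith [ht.1]) (by linarith [ht.2])

lemma monotoneOn_neg_one_pow_mul_sinSubMulCos (m : ℕ) :
    MonotoneOn (fun t => (-1) ^ m * sinSubMulCos t) (Icc (m * π) ((m + 1) * π)) := by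
  have hderiv (t : ℝ) : HasDerivAt (fun t => (-1) ^ m * sinSubMulCos t)
      (t * ((-1) ^ m * sin t)) t :=
    ((hasDerivAt_sinSubMulCos t).const_mul _).congr_deriv (by ring)
  refine monotoneOn_of_hasDerivWithinAt_nonneg (convex_Icc _ _)
    (fun t _ => (hderiv t).continuousAt.continuousWithinAt)
    (fun t _ => (hderiv t).hasDerivWithinAt) fun t ht => ?_
  rw [interior_Icc] at ht
  have ht' := Ioo_subset_Icc_self ht
  exact mul_nonneg (le_trans (by positivity) ht'.1) (neg_one_pow_mul_sin_nonneg m ht')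

lemma neg_one_pow_mul_sinSubMulCos_nonneg_of_mem_Icc (m : ℕ) {a b t : ℝ}
    (ha : a ∈ Icc (m * π) ((m + 1) * π)) (ha₀ : sinSubMulCos a = 0)
    (hb : b ∈ Icc ((m + 1) * π) ((m + 1 + 1) * π)) (hb₀ : sinSubMulCos b = 0)
    (ht : t ∈ Icc a b) :
    0 ≤ (-1) ^ m * sinSubMulCos t := by
  rcases le_total t ((m + 1) * π) with hle | hge
  · have := monotoneOn_neg_one_pow_mul_sinSubMulCos m ha ⟨ha.1.trans ht.1, hle⟩ ht.1
    simpa [ha₀] using this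
  · have := monotoneOn_neg_one_pow_mul_sinSubMulCos (m + 1)
      (by exact_mod_cast (⟨hge, ht.2.trans hb.2⟩ : t ∈ Icc _ _)) (by exact_mod_cast hb) ht.2
    simp only [hb₀, mul_zero, pow_succ] at this
    linarith

lemma nonneg_or_nonpos_of_neg_one_pow_mul_nonneg {ι : Type*} (m : ℕ) {g : ι → ℝ} {s : Set ι}
    (h : ∀ x ∈ s, 0 ≤ (-1) ^ m * g x) : (∀ x ∈ s, 0 ≤ g x) ∨ (∀ x ∈ s, g x ≤ 0) := by
  rcases m.even_or_odd with hm | hm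
  · exact Or.inl fun x hx => by simpa [hm.neg_one_pow] using h x hx
  · exact Or.inr fun x hx => by simpa [hm.neg_one_pow] using h x hx

lemma monotoneOn_or_antitoneOn_of_hasDerivAt {f f' : ℝ → ℝ} {D : Set ℝ} (hD : Convex ℝ D)
    (hf : ∀ x ∈ D, HasDerivAt f (f' x) x) (h : (∀ x ∈ D, 0 ≤ f' x) ∨ (∀ x ∈ D, f' x ≤ 0)) :
    MonotoneOn f D ∨ AntitoneOn f D := by
  have hcont : ContinuousOn f D := fun x hx => (hf x hx).continuousAt.continuousWithinAt
  have hf' : ∀ x ∈ interior D, HasDerivWithinAt f (f' x) (interior D) x :=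
    fun x hx => (hf x (interior_subset hx)).hasDerivWithinAt
  exact h.imp
    (fun h => monotoneOn_of_hasDerivWithinAt_nonneg hD hcont hf' (h · <| interior_subset ·))
    (fun h => antitoneOn_of_hasDerivWithinAt_nonpos hD hcont hf' (h · <| interior_subset ·))

lemma one_div_mem_Icc_of_mem_Icc_one_div {a b x : ℝ} (hb : 0 < b)
    (hx : x ∈ Icc (1 / b) (1 / a)) : 1 / x ∈ Icc a b := by
  have hx₀ : 0 < x := lt_of_lt_of_le (by positivity) hx.1
  constructor
  · simpa using one_div_le_one_div_of_le hx₀ hx.2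
  · simpa using one_div_le_one_div_of_le (by positivity) hx.1

theorem monotone_on_interval (α : ℕ → ℝ)
    (hα : ∀ n : ℕ, 1 ≤ n →
      α n ∈ Set.Ioo (n * Real.pi) (n * Real.pi + Real.pi / 2) ∧
        Real.sin (α n) - α n * Real.cos (α n) = 0)
    (n : ℕ) (hn : 1 ≤ n) :
    (MonotoneOn (fun x => x * Real.sin (1 / x)) (Set.Icc (1 / α (n + 1)) (1 / α n)) ∨
      AntitoneOn (fun x => x * Real.sin (1 / x)) (Set.Icc (1 / α (n + 1)) (1 / α n))) ∧
    ((∀ x ∈ Set.Icc (1 / α (n + 1)) (1 / α n),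
        0 ≤ Real.sin (1 / x) - (1 / x) * Real.cos (1 / x)) ∨
      (∀ x ∈ Set.Icc (1 / α (n + 1)) (1 / α n),
        Real.sin (1 / x) - (1 / x) * Real.cos (1 / x) ≤ 0)) := by
  obtain ⟨⟨hlo, hhi⟩, hzero⟩ := hα n hn
  obtain ⟨⟨hlo', hhi'⟩, hzero'⟩ := hα (n + 1) (by omega)
  push_cast at hlo' hhi'
  have hpos : 0 < α (n + 1) := lt_of_le_of_lt (by positivity) hlo'
  have hsign : ∀ x ∈ Icc (1 / α (n + 1)) (1 / α n), 0 ≤ (-1) ^ n * sinSubMulCos (1 / x) :=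
    fun x hx => neg_one_pow_mul_sinSubMulCos_nonneg_of_mem_Icc n
      ⟨hlo.le, by linarith [pi_pos]⟩ hzero ⟨hlo'.le, by linarith [pi_pos]⟩ hzero'
      (one_div_mem_Icc_of_mem_Icc_one_div hpos hx)
  have hderiv : ∀ x ∈ Icc (1 / α (n + 1)) (1 / α n),
      HasDerivAt (fun x => x * sin (1 / x)) (sinSubMulCos (1 / x)) x := fun x hx =>
    hasDerivAt_mul_sin_one_div_s18 (lt_of_lt_of_le (by positivity) hx.1).ne'
  have hconst := nonneg_or_nonpos_of_neg_one_pow_mul_nonneg n hsign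
  exact ⟨monotoneOn_or_antitoneOn_of_hasDerivAt (convex_Icc _ _) hderiv hconst, hconst⟩
end
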